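/- Fix R ≥ 1. There exist ρ₀ > 0 and K₀ ≥ 1, depending only on R, such that for every ℓ ∈ SL₂ with parameter vector of norm ≤ R, the map F_ℓ : SL₂ → ℝ³ given by F_ℓ(ℓ') = (A, B, C) as in the twisted-projection coefficient formula is bilipschitz with constant K₀ on the ball of radius ρ₀ around ℓ: K₀⁻¹·d(ℓ',ℓ'') ≤ |F_ℓ(ℓ') − F_ℓ(ℓ'')| ≤ K₀·d(ℓ',ℓ'') for all ℓ', ℓ'' in SL₂ within distance ρ₀ of ℓ. -/

import Mathlib

/-- The coefficient triple `(A,B,C)` of the parabola `π_{ℓ_{(a,b,c,d)}}(ℓ_{(a',b',c',d')})`. -/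
noncomputable def coeffF (a b c d a' b' c' d' : ℝ) : EuclideanSpace ℝ (Fin 3) :=
  WithLp.toLp 2 ![c * d' - d * c', a * d' - b * c' + c * b' - d * a', a * b' - b * a']

/-- SL₂ parameter vector in `ℝ⁴`. -/
noncomputable def v4 (a b c d : ℝ) : EuclideanSpace ℝ (Fin 4) := WithLp.toLp 2 ![a, b, c, d]

/-!
`F_ℓ` is linear in `ℓ'`, so `F_ℓ(ℓ₁) - F_ℓ(ℓ₂) = F_ℓ(v)` with `v = ℓ₁ - ℓ₂`, and the upper bound
is Cauchy–Schwarz. For the lower bound, `ad - bc = 1` lets one recover `v` from the three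
coefficients of `F_ℓ(v)` together with the derivative `e` of the determinant at `ℓ` in the
direction `v`, giving `‖v‖² ≤ ‖ℓ‖² (‖F_ℓ(v)‖² + e²)`. As the determinant is quadratic and equal
to `1` at both `ℓ₁` and `ℓ₂`, `2|e| ≤ (‖ℓ₁ - ℓ‖ + ‖ℓ₂ - ℓ‖) ‖v‖`, so on the ball of radius
`ρ₀ = 1/(2R)` the term `‖ℓ‖² e²` is absorbed and `K₀ = 2R` works.
-/

section

variable (a b c d x y z w : ℝ)

lemma v4_sub (a' b' c' d' : ℝ) :
    v4 a b c d - v4 a' b' c' d' = v4 (a - a') (b - b') (c - c') (d - d') := by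
  ext i; fin_cases i <;> simp [v4]

lemma coeffF_sub (a₁ b₁ c₁ d₁ a₂ b₂ c₂ d₂ : ℝ) :
    coeffF a b c d a₁ b₁ c₁ d₁ - coeffF a b c d a₂ b₂ c₂ d₂
      = coeffF a b c d (a₁ - a₂) (b₁ - b₂) (c₁ - c₂) (d₁ - d₂) := by
  ext i; fin_cases i <;> simp [coeffF] <;> ring

lemma inner_v4 : inner ℝ (v4 a b c d) (v4 x y z w) = a * x + b * y + c * z + d * w := by
  simp [v4, PiLp.inner_apply, Fin.sum_univ_four]; ring

lemma norm_v4_sq : ‖v4 a b c d‖ ^ 2 = a ^ 2 + b ^ 2 + c ^ 2 + d ^ 2 := by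
  rw [← real_inner_self_eq_norm_sq, inner_v4]; ring

lemma norm_coeffF_sq :
    ‖coeffF a b c d x y z w‖ ^ 2
      = (c * w - d * z) ^ 2 + (a * w - b * z + c * y - d * x) ^ 2 + (a * y - b * x) ^ 2 := by
  rw [EuclideanSpace.norm_sq_eq]
  simp [coeffF, Fin.sum_univ_three]

lemma norm_coeffF_le : ‖coeffF a b c d x y z w‖ ≤ 2 * ‖v4 a b c d‖ * ‖v4 x y z w‖ := by
  rw [← pow_le_pow_iff_left₀ (norm_nonneg _) (by positivity) two_ne_zero, mul_pow, mul_pow,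
    norm_coeffF_sq, norm_v4_sq, norm_v4_sq]
  have hA : (c * w - d * z) ^ 2 ≤ (c ^ 2 + d ^ 2) * (z ^ 2 + w ^ 2) := by
    nlinarith [sq_nonneg (c * z + d * w)]
  have hC : (a * y - b * x) ^ 2 ≤ (a ^ 2 + b ^ 2) * (x ^ 2 + y ^ 2) := by
    nlinarith [sq_nonneg (a * x + b * y)]
  have hB : (a * w - b * z + c * y - d * x) ^ 2
      ≤ (a ^ 2 + b ^ 2 + c ^ 2 + d ^ 2) * (x ^ 2 + y ^ 2 + z ^ 2 + w ^ 2) := by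
    nlinarith [sq_nonneg (a * z + b * w), sq_nonneg (a * y - c * w), sq_nonneg (a * x + d * w),
      sq_nonneg (b * y + c * z), sq_nonneg (d * z - b * x), sq_nonneg (c * x + d * y)]
  nlinarith [
    mul_nonneg (add_nonneg (sq_nonneg a) (sq_nonneg b)) (add_nonneg (sq_nonneg z) (sq_nonneg w)),
    mul_nonneg (add_nonneg (sq_nonneg c) (sq_nonneg d)) (add_nonneg (sq_nonneg x) (sq_nonneg y))]

def detDeriv : ℝ := a * w - b * z - c * y + d * x

lemma abs_detDeriv_le : |detDeriv a b c d x y z w| ≤ ‖v4 a b c d‖ * ‖v4 x y z w‖ := by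
  have hJ : ‖v4 d (-c) (-b) a‖ = ‖v4 a b c d‖ := by
    rw [← sq_eq_sq₀ (norm_nonneg _) (norm_nonneg _), norm_v4_sq, norm_v4_sq]; ring
  have h := abs_real_inner_le_norm (v4 d (-c) (-b) a) (v4 x y z w)
  rwa [inner_v4, hJ, show d * x + -c * y + -b * z + a * w = detDeriv a b c d x y z w by
    unfold detDeriv; ring] at h

lemma two_mul_detDeriv_sub (a₁ b₁ c₁ d₁ a₂ b₂ c₂ d₂ : ℝ)
    (h : a₁ * d₁ - b₁ * c₁ = a₂ * d₂ - b₂ * c₂) :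
    2 * detDeriv a b c d (a₁ - a₂) (b₁ - b₂) (c₁ - c₂) (d₁ - d₂)
      = -(detDeriv (a₁ - a) (b₁ - b) (c₁ - c) (d₁ - d) (a₁ - a₂) (b₁ - b₂) (c₁ - c₂) (d₁ - d₂)
        + detDeriv (a₂ - a) (b₂ - b) (c₂ - c) (d₂ - d) (a₁ - a₂) (b₁ - b₂) (c₁ - c₂) (d₁ - d₂)) := by
  unfold detDeriv; linear_combination 2 * h

lemma two_mul_abs_detDeriv_sub_le (a₁ b₁ c₁ d₁ a₂ b₂ c₂ d₂ : ℝ)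
    (h : a₁ * d₁ - b₁ * c₁ = a₂ * d₂ - b₂ * c₂) :
    2 * |detDeriv a b c d (a₁ - a₂) (b₁ - b₂) (c₁ - c₂) (d₁ - d₂)|
      ≤ (dist (v4 a₁ b₁ c₁ d₁) (v4 a b c d) + dist (v4 a₂ b₂ c₂ d₂) (v4 a b c d))
        * dist (v4 a₁ b₁ c₁ d₁) (v4 a₂ b₂ c₂ d₂) := by
  simp only [dist_eq_norm, v4_sub]
  rw [← abs_two, ← abs_mul, two_mul_detDeriv_sub a b c d _ _ _ _ _ _ _ _ h, abs_neg, add_mul]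
  exact (abs_add_le _ _).trans (add_le_add (abs_detDeriv_le ..) (abs_detDeriv_le ..))

lemma sq_add_sq_le_sum_sq_mul_sum_sq (p q : ℝ) :
    (c * p - a * q) ^ 2 + (d * p - b * q) ^ 2
      ≤ (a ^ 2 + b ^ 2 + c ^ 2 + d ^ 2) * (p ^ 2 + q ^ 2) := by
  nlinarith [sq_nonneg (a * p + c * q), sq_nonneg (b * p + d * q)]

lemma norm_v4_sq_le (hdet : a * d - b * c = 1) :
    ‖v4 x y z w‖ ^ 2
      ≤ ‖v4 a b c d‖ ^ 2 * (‖coeffF a b c d x y z w‖ ^ 2 + detDeriv a b c d x y z w ^ 2) := by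
  have hxy := sq_add_sq_le_sum_sq_mul_sum_sq a b c d (a * y - b * x) (c * y - d * x)
  have hzw := sq_add_sq_le_sum_sq_mul_sum_sq a b c d (a * w - b * z) (c * w - d * z)
  -- `(x, y)` and `(z, w)` are recovered by inverting `[[a, b], [c, d]]`
  rw [show c * (a * y - b * x) - a * (c * y - d * x) = x by linear_combination x * hdet,
    show d * (a * y - b * x) - b * (c * y - d * x) = y by linear_combination y * hdet] at hxy
  rw [show c * (a * w - b * z) - a * (c * w - d * z) = z by linear_combination z * hdet,
    show d * (a * w - b * z) - b * (c * w - d * z) = w by linear_combination w * hdet] at hzw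
  rw [norm_v4_sq, norm_v4_sq, norm_coeffF_sq, detDeriv]
  nlinarith [sq_nonneg (a * w - b * z - c * y + d * x), sq_nonneg (a * w - b * z + c * y - d * x)]

lemma norm_v4_le_of_abs_detDeriv_le (R : ℝ) (hdet : a * d - b * c = 1)
    (hℓ : ‖v4 a b c d‖ ≤ R) (he : 2 * R * |detDeriv a b c d x y z w| ≤ ‖v4 x y z w‖) :
    ‖v4 x y z w‖ ≤ 2 * R * ‖coeffF a b c d x y z w‖ := by
  have hR : 0 ≤ R := (norm_nonneg _).trans hℓ
  rw [← pow_le_pow_iff_left₀ (norm_nonneg _) (by positivity) two_ne_zero]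
  have hN : ‖v4 a b c d‖ ^ 2 ≤ R ^ 2 := pow_le_pow_left₀ (norm_nonneg _) hℓ 2
  have he2 : (2 * R * |detDeriv a b c d x y z w|) ^ 2 ≤ ‖v4 x y z w‖ ^ 2 :=
    pow_le_pow_left₀ (by positivity) he 2
  rw [mul_pow, mul_pow, sq_abs] at he2
  nlinarith [norm_v4_sq_le a b c d x y z w hdet,
    mul_le_mul_of_nonneg_right hN (add_nonneg (sq_nonneg ‖coeffF a b c d x y z w‖)
      (sq_nonneg (detDeriv a b c d x y z w)))]

end

/-- There are `ρ₀ > 0` and `K₀ ≥ 1` depending only on `R` such that for each `ℓ ∈ SL₂`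
with parameter vector of norm `≤ R`, the map `F_ℓ(ℓ') = (A,B,C)` is bilipschitz with
constant `K₀` on the ball of radius `ρ₀` around `ℓ` in `SL₂`. -/
theorem stmt12 (R : ℝ) (hR : 1 ≤ R) :
    ∃ ρ₀ > 0, ∃ K₀ : ℝ, 1 ≤ K₀ ∧
    ∀ a b c d : ℝ, a * d - b * c = 1 → ‖v4 a b c d‖ ≤ R →
    ∀ a₁ b₁ c₁ d₁ a₂ b₂ c₂ d₂ : ℝ,
      a₁ * d₁ - b₁ * c₁ = 1 → a₂ * d₂ - b₂ * c₂ = 1 →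
      dist (v4 a₁ b₁ c₁ d₁) (v4 a b c d) ≤ ρ₀ →
      dist (v4 a₂ b₂ c₂ d₂) (v4 a b c d) ≤ ρ₀ →
      K₀⁻¹ * dist (v4 a₁ b₁ c₁ d₁) (v4 a₂ b₂ c₂ d₂)
          ≤ dist (coeffF a b c d a₁ b₁ c₁ d₁) (coeffF a b c d a₂ b₂ c₂ d₂) ∧
      dist (coeffF a b c d a₁ b₁ c₁ d₁) (coeffF a b c d a₂ b₂ c₂ d₂)
          ≤ K₀ * dist (v4 a₁ b₁ c₁ d₁) (v4 a₂ b₂ c₂ d₂) := by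
  have hR₀ : 0 < 2 * R := by linarith
  refine ⟨(2 * R)⁻¹, inv_pos.2 hR₀, 2 * R, by linarith, ?_⟩
  intro a b c d hdet hℓ a₁ b₁ c₁ d₁ a₂ b₂ c₂ d₂ h₁ h₂ hd₁ hd₂
  have he : 2 * R * |detDeriv a b c d (a₁ - a₂) (b₁ - b₂) (c₁ - c₂) (d₁ - d₂)|
      ≤ dist (v4 a₁ b₁ c₁ d₁) (v4 a₂ b₂ c₂ d₂) := by
    have h := two_mul_abs_detDeriv_sub_le a b c d a₁ b₁ c₁ d₁ a₂ b₂ c₂ d₂ (h₁.trans h₂.symm)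
    calc 2 * R * |detDeriv a b c d (a₁ - a₂) (b₁ - b₂) (c₁ - c₂) (d₁ - d₂)|
        = R * (2 * |detDeriv a b c d (a₁ - a₂) (b₁ - b₂) (c₁ - c₂) (d₁ - d₂)|) := by ring
      _ ≤ R * (((2 * R)⁻¹ + (2 * R)⁻¹) * dist (v4 a₁ b₁ c₁ d₁) (v4 a₂ b₂ c₂ d₂)) := by
          gcongr R * ?_
          exact h.trans (by gcongr)
      _ = dist (v4 a₁ b₁ c₁ d₁) (v4 a₂ b₂ c₂ d₂) := by field_simp; ring
  simp only [dist_eq_norm, v4_sub, coeffF_sub] at he ⊢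
  exact ⟨(inv_mul_le_iff₀ hR₀).2 (norm_v4_le_of_abs_detDeriv_le _ _ _ _ _ _ _ _ R hdet hℓ he),
    (norm_coeffF_le ..).trans (by gcongr)⟩
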